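/- arXiv:2211.11986 — 3 statements merged into one kernel-verified Lean document; each statement's English description precedes it below -/
import Mathlib

section
/- Let G be a finite abelian group of order v, let D be a k-element subset of G not containing the identity, and suppose k(k−1) = λk + μ(v−1−k) and (λ−μ)² + 4(k−μ) ≥ 0. Then D is a (v,k,λ,μ) partial difference set in G satisfying D^{(-1)} = D if and only if for every nonprincipal character χ of G, χ(D) = (1/2)( λ − μ + √((λ−μ)² + 4(k−μ)) ) or χ(D) = (1/2)( λ − μ − √((λ−μ)² + 4(k−μ)) ). -/
open scoped Classical Pointwise

namespace PDSaux

variable {G : Type*} [CommGroup G] [Fintype G]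

lemma enough : HasEnoughRootsOfUnity ℂ (Monoid.exponent G) := by
  haveI : NeZero ((Monoid.exponent G : ℂ)) :=
    ⟨Nat.cast_ne_zero.mpr Monoid.exponent_ne_zero_of_finite⟩
  infer_instance

lemma finite_chars : Finite (G →* ℂˣ) := by
  haveI := enough (G := G)
  obtain ⟨e⟩ := CommGroup.monoidHom_mulEquiv_of_hasEnoughRootsOfUnity G ℂ
  exact Finite.of_equiv G e.symm.toEquiv

noncomputable instance : Fintype (G →* ℂˣ) :=
  haveI := finite_chars (G := G)
  Fintype.ofFinite _

lemma sum_char_univ {χ : G →* ℂˣ} (h : χ ≠ 1) : ∑ g : G, (χ g : ℂ) = 0 := by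
  obtain ⟨a, ha⟩ : ∃ a : G, χ a ≠ 1 := by
    by_contra hc
    push_neg at hc
    exact h (MonoidHom.ext fun g => (hc g).trans rfl)
  have key : (χ a : ℂ) * ∑ g : G, (χ g : ℂ) = ∑ g : G, (χ g : ℂ) := by
    calc (χ a : ℂ) * ∑ g : G, (χ g : ℂ) = ∑ g : G, (χ (a * g) : ℂ) := by
          rw [Finset.mul_sum]
          exact Finset.sum_congr rfl fun g _ => by rw [map_mul]; push_cast; ring
      _ = ∑ g : G, (χ g : ℂ) := Equiv.sum_comp (Equiv.mulLeft a) (fun g => (χ g : ℂ))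
  have h2 : ((χ a : ℂ) - 1) * ∑ g : G, (χ g : ℂ) = 0 := by linear_combination key
  rcases mul_eq_zero.mp h2 with h3 | h3
  · exact absurd (Units.ext (by simpa using sub_eq_zero.mp h3)) ha
  · exact h3

lemma sum_chars_apply {a : G} (h : a ≠ 1) : ∑ χ : G →* ℂˣ, (χ a : ℂ) = 0 := by
  haveI := enough (G := G)
  obtain ⟨φ, hφ⟩ := CommGroup.exists_apply_ne_one_of_hasEnoughRootsOfUnity G ℂ h
  have key : (φ a : ℂ) * ∑ χ : G →* ℂˣ, (χ a : ℂ) = ∑ χ : G →* ℂˣ, (χ a : ℂ) := by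
    calc (φ a : ℂ) * ∑ χ : G →* ℂˣ, (χ a : ℂ) = ∑ χ : G →* ℂˣ, (((φ * χ) a : ℂˣ) : ℂ) := by
          rw [Finset.mul_sum]
          exact Finset.sum_congr rfl fun χ _ => by
            rw [MonoidHom.mul_apply]; push_cast; ring
      _ = ∑ χ : G →* ℂˣ, (χ a : ℂ) :=
          Equiv.sum_comp (Equiv.mulLeft φ) (fun χ : G →* ℂˣ => (χ a : ℂ))
  have h2 : ((φ a : ℂ) - 1) * ∑ χ : G →* ℂˣ, (χ a : ℂ) = 0 := by linear_combination key
  rcases mul_eq_zero.mp h2 with h3 | h3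
  · exact absurd (Units.ext (by simpa using sub_eq_zero.mp h3)) hφ
  · exact h3

/-- Fourier inversion: if all character sums of `F` vanish, then `F = 0`. -/
lemma inversion (F : G → ℂ) (h : ∀ χ : G →* ℂˣ, ∑ g : G, F g * (χ g : ℂ) = 0)
    (g₀ : G) : F g₀ = 0 := by
  have key : ∑ χ : G →* ℂˣ, (χ g₀⁻¹ : ℂ) * ∑ g : G, F g * (χ g : ℂ) = 0 := by
    simp [h]
  have e1 : ∀ χ : G →* ℂˣ, (χ g₀⁻¹ : ℂ) * ∑ g : G, F g * (χ g : ℂ)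
      = ∑ g : G, F g * (χ (g * g₀⁻¹) : ℂ) := by
    intro χ
    rw [Finset.mul_sum]
    exact Finset.sum_congr rfl fun g _ => by rw [map_mul]; push_cast; ring
  rw [Finset.sum_congr rfl (fun χ _ => e1 χ), Finset.sum_comm] at key
  have e2 : ∀ g : G, ∑ χ : G →* ℂˣ, F g * (χ (g * g₀⁻¹) : ℂ)
      = if g = g₀ then F g * (Fintype.card (G →* ℂˣ) : ℂ) else 0 := by
    intro g
    rw [← Finset.mul_sum]
    by_cases hg : g = g₀
    · subst hg
      simp [Finset.card_univ]
    · rw [sum_chars_apply (by simpa [mul_inv_eq_one] using hg), mul_zero, if_neg hg]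
  rw [Finset.sum_congr rfl (fun g _ => e2 g), Finset.sum_ite_eq' Finset.univ g₀] at key
  simp only [Finset.mem_univ, if_true] at key
  haveI : Nonempty (G →* ℂˣ) := ⟨1⟩
  rcases mul_eq_zero.mp key with h3 | h3
  · exact h3
  · exact absurd h3 (by exact_mod_cast Fintype.card_ne_zero)

lemma char_inv_eq_conj (χ : G →* ℂˣ) (g : G) :
    ((χ g⁻¹ : ℂˣ) : ℂ) = (starRingEnd ℂ) ((χ g : ℂˣ) : ℂ) := by
  have hpow : ((χ g : ℂˣ) : ℂ) ^ (Fintype.card G) = 1 := by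
    rw [← Units.val_pow_eq_pow_val, ← map_pow, pow_card_eq_one, map_one, Units.val_one]
  have hnorm : ‖((χ g : ℂˣ) : ℂ)‖ = 1 :=
    Complex.norm_eq_one_of_pow_eq_one hpow Fintype.card_ne_zero
  rw [map_inv, ← Complex.inv_eq_conj hnorm]
  exact Units.val_inv_eq_inv_val _

lemma sum_count_mul_char (D : Finset G) (χ : G →* ℂˣ) :
    ∑ g : G, ((((D ×ˢ D).filter (fun p => p.1 ≠ p.2 ∧ p.1 * p.2⁻¹ = g)).card : ℂ)) * (χ g : ℂ)
      = (∑ x ∈ D, (χ x : ℂ)) * (∑ y ∈ D, (χ y⁻¹ : ℂ)) - D.card := by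
  have step1 : ∀ g : G,
      ((((D ×ˢ D).filter (fun p => p.1 ≠ p.2 ∧ p.1 * p.2⁻¹ = g)).card : ℂ)) * (χ g : ℂ)
        = ∑ p ∈ ((D ×ˢ D).filter (fun p => p.1 ≠ p.2)).filter (fun p => p.1 * p.2⁻¹ = g),
            ((χ (p.1 * p.2⁻¹) : ℂˣ) : ℂ) := by
    intro g
    rw [Finset.filter_filter,
      Finset.sum_congr rfl (fun p hp => by rw [(Finset.mem_filter.mp hp).2.2]),
      Finset.sum_const, nsmul_eq_mul]
  rw [Finset.sum_congr rfl fun g _ => step1 g,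
    Finset.sum_fiberwise ((D ×ˢ D).filter (fun p => p.1 ≠ p.2)) (fun p => p.1 * p.2⁻¹)
      (fun p => ((χ (p.1 * p.2⁻¹) : ℂˣ) : ℂ))]
  have split := Finset.sum_filter_add_sum_filter_not (D ×ˢ D) (fun p => p.1 ≠ p.2)
      (fun p => ((χ (p.1 * p.2⁻¹) : ℂˣ) : ℂ))
  have hdiagset : (D ×ˢ D).filter (fun p => ¬ p.1 ≠ p.2) = D.image (fun x => (x, x)) := by
    ext ⟨x, y⟩
    simp only [Finset.mem_filter, Finset.mem_product, not_not, Finset.mem_image, Prod.mk.injEq]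
    constructor
    · rintro ⟨⟨hx, _⟩, h⟩
      exact ⟨x, hx, rfl, h⟩
    · rintro ⟨a, ha, rfl, rfl⟩
      exact ⟨⟨ha, ha⟩, rfl⟩
  have hdiag : ∑ p ∈ (D ×ˢ D).filter (fun p => ¬ p.1 ≠ p.2), ((χ (p.1 * p.2⁻¹) : ℂˣ) : ℂ)
      = D.card := by
    rw [Finset.sum_congr rfl (fun p hp => ?_), Finset.sum_const, nsmul_eq_mul, mul_one]
    · rw [hdiagset, Finset.card_image_of_injective _ (fun a b h => (Prod.mk.injEq _ _ _ _).mp h |>.1)]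
    · have h := (Finset.mem_filter.mp hp).2
      rw [not_not] at h
      rw [h, mul_inv_cancel, map_one, Units.val_one]
  have htotal : ∑ p ∈ D ×ˢ D, ((χ (p.1 * p.2⁻¹) : ℂˣ) : ℂ)
      = (∑ x ∈ D, (χ x : ℂ)) * (∑ y ∈ D, (χ y⁻¹ : ℂ)) := by
    rw [Finset.sum_product, Finset.sum_mul_sum]
    exact Finset.sum_congr rfl fun x _ => Finset.sum_congr rfl fun y _ => by
      rw [map_mul]; push_cast; ring
  linear_combination split - hdiag + htotal

lemma key_identity (D : Finset G) (k lam mu : ℕ) (hk : D.card = k) (h1 : (1 : G) ∉ D)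
    (χ : G →* ℂˣ) :
    ∑ g : G, (((((D ×ˢ D).filter (fun p => p.1 ≠ p.2 ∧ p.1 * p.2⁻¹ = g)).card : ℂ))
        - lam * (if g ∈ D then 1 else 0) - mu * (if g ∈ D ∨ g = 1 then 0 else 1)) * (χ g : ℂ)
      = ((∑ x ∈ D, (χ x : ℂ)) * (∑ y ∈ D, (χ y⁻¹ : ℂ)) - k)
        - lam * (∑ x ∈ D, (χ x : ℂ))
        - mu * ((∑ g : G, (χ g : ℂ)) - (∑ x ∈ D, (χ x : ℂ)) - 1) := by
  have expand : ∀ g : G,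
      (((((D ×ˢ D).filter (fun p => p.1 ≠ p.2 ∧ p.1 * p.2⁻¹ = g)).card : ℂ))
          - lam * (if g ∈ D then 1 else 0) - mu * (if g ∈ D ∨ g = 1 then 0 else 1)) * (χ g : ℂ)
        = ((((D ×ˢ D).filter (fun p => p.1 ≠ p.2 ∧ p.1 * p.2⁻¹ = g)).card : ℂ)) * (χ g : ℂ)
          - lam * (if g ∈ D then (χ g : ℂ) else 0)
          - mu * ((χ g : ℂ) - (if g ∈ D then (χ g : ℂ) else 0)
              - (if g = 1 then (χ g : ℂ) else 0)) := by
    intro g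
    by_cases h1g : g ∈ D <;> by_cases h2g : g = 1
    · exact absurd (h2g ▸ h1g) h1
    · simp only [h1g, h2g, if_true, if_false, true_or, or_false]; ring
    · subst h2g; simp only [h1, if_false, or_true, if_true]; ring
    · simp only [h1g, h2g, if_false, or_self]; ring
  rw [Finset.sum_congr rfl fun g _ => expand g]
  have hD : ∑ g : G, (if g ∈ D then (χ g : ℂ) else 0) = ∑ x ∈ D, (χ x : ℂ) := by
    rw [Finset.sum_ite_mem, Finset.univ_inter]
  have hone : ∑ g : G, (if g = 1 then (χ g : ℂ) else 0) = 1 := by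
    rw [Finset.sum_ite_eq' Finset.univ (1 : G) (fun g => (χ g : ℂ))]
    simp
  rw [Finset.sum_sub_distrib, Finset.sum_sub_distrib, ← Finset.mul_sum, ← Finset.mul_sum,
    Finset.sum_sub_distrib, Finset.sum_sub_distrib, hD, hone,
    sum_count_mul_char D χ, hk]

end PDSaux

open scoped Classical Pointwise in
/-- Character criterion for partial difference sets: let `G` be an abelian group of order
`v`, let `D` be a `k`-subset of `G` not containing the identity, and suppose
`k(k-1) = λk + μ(v-1-k)` and `(λ-μ)² + 4(k-μ) ≥ 0`.  Then `D` is a `(v,k,λ,μ)` partial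
difference set in `G` (each element of `D` occurs exactly `λ` times, and each nonidentity
element of `G \ D` exactly `μ` times, among the differences `x y⁻¹` of distinct elements
`x, y ∈ D`) satisfying `D⁽⁻¹⁾ = D` if and only if for every nonprincipal character `χ`
of `G`, `χ(D) = (λ - μ ± √((λ-μ)² + 4(k-μ)))/2`. -/
theorem partialDiffSet_iff_charSums {G : Type*} [CommGroup G] [Fintype G]
    (v k lam mu : ℕ) (D : Finset G) (hv : Fintype.card G = v) (hk : D.card = k)
    (h1 : (1 : G) ∉ D)
    (hparam : (k : ℤ) * (k - 1) = lam * k + mu * ((v : ℤ) - 1 - k))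
    (hdisc : ((lam : ℝ) - mu) ^ 2 + 4 * ((k : ℝ) - mu) ≥ 0) :
    ((∀ g ∈ D,
        ((D ×ˢ D).filter (fun p => p.1 ≠ p.2 ∧ p.1 * p.2⁻¹ = g)).card = lam) ∧
      (∀ g : G, g ∉ D → g ≠ 1 →
        ((D ×ˢ D).filter (fun p => p.1 ≠ p.2 ∧ p.1 * p.2⁻¹ = g)).card = mu) ∧
      D⁻¹ = D) ↔
      (∀ χ : G →* ℂˣ, χ ≠ 1 →
        (∑ d ∈ D, (χ d : ℂ)) =
            (((lam : ℝ) - mu + Real.sqrt (((lam : ℝ) - mu) ^ 2 + 4 * ((k : ℝ) - mu)) : ℝ)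
              : ℂ) / 2 ∨
          (∑ d ∈ D, (χ d : ℂ)) =
            (((lam : ℝ) - mu - Real.sqrt (((lam : ℝ) - mu) ^ 2 + 4 * ((k : ℝ) - mu)) : ℝ)
              : ℂ) / 2) := by
  haveI := PDSaux.finite_chars (G := G)
  have hr2 : ((Real.sqrt (((lam : ℝ) - mu) ^ 2 + 4 * ((k : ℝ) - mu)) : ℝ) : ℂ) ^ 2
      = ((lam : ℂ) - mu) ^ 2 + 4 * ((k : ℂ) - mu) := by
    calc ((Real.sqrt (((lam : ℝ) - mu) ^ 2 + 4 * ((k : ℝ) - mu)) : ℝ) : ℂ) ^ 2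
        = (((Real.sqrt (((lam : ℝ) - mu) ^ 2 + 4 * ((k : ℝ) - mu)) ^ 2 : ℝ)) : ℂ) := by
          push_cast; ring
      _ = ((((lam : ℝ) - mu) ^ 2 + 4 * ((k : ℝ) - mu) : ℝ) : ℂ) := by
          rw [Real.sq_sqrt hdisc]
      _ = _ := by push_cast; ring
  have quad : ∀ Z : ℂ, Z ^ 2 = ((lam : ℂ) - mu) * Z + ((k : ℂ) - mu) ↔
      (Z = (((lam : ℝ) - mu + Real.sqrt (((lam : ℝ) - mu) ^ 2 + 4 * ((k : ℝ) - mu)) : ℝ)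
              : ℂ) / 2 ∨
        Z = (((lam : ℝ) - mu - Real.sqrt (((lam : ℝ) - mu) ^ 2 + 4 * ((k : ℝ) - mu)) : ℝ)
              : ℂ) / 2) := by
    intro Z
    have e1 : (((lam : ℝ) - mu + Real.sqrt (((lam : ℝ) - mu) ^ 2 + 4 * ((k : ℝ) - mu)) : ℝ) : ℂ)
        = ((lam : ℂ) - mu)
          + ((Real.sqrt (((lam : ℝ) - mu) ^ 2 + 4 * ((k : ℝ) - mu)) : ℝ) : ℂ) := by
      push_cast; ring
    have e2 : (((lam : ℝ) - mu - Real.sqrt (((lam : ℝ) - mu) ^ 2 + 4 * ((k : ℝ) - mu)) : ℝ) : ℂ)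
        = ((lam : ℂ) - mu)
          - ((Real.sqrt (((lam : ℝ) - mu) ^ 2 + 4 * ((k : ℝ) - mu)) : ℝ) : ℂ) := by
      push_cast; ring
    rw [e1, e2]
    constructor
    · intro hZ
      have hfac : (2 * Z - (((lam : ℂ) - mu)
            + ((Real.sqrt (((lam : ℝ) - mu) ^ 2 + 4 * ((k : ℝ) - mu)) : ℝ) : ℂ)))
          * (2 * Z - (((lam : ℂ) - mu)
            - ((Real.sqrt (((lam : ℝ) - mu) ^ 2 + 4 * ((k : ℝ) - mu)) : ℝ) : ℂ))) = 0 := by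
        linear_combination 4 * hZ - hr2
      rcases mul_eq_zero.mp hfac with h' | h'
      · left; linear_combination h' / 2
      · right; linear_combination h' / 2
    · rintro (h' | h') <;> rw [h'] <;> linear_combination hr2 / 4
  have hSinv : ∀ χ : G →* ℂˣ, ∑ y ∈ D⁻¹, (χ y : ℂ) = ∑ y ∈ D, (χ y⁻¹ : ℂ) := by
    intro χ
    rw [← Finset.image_inv_eq_inv, Finset.sum_image (fun a _ b _ h => inv_injective h)]
  have hSconj : ∀ χ : G →* ℂˣ, ∑ y ∈ D, (χ y⁻¹ : ℂ)
      = (starRingEnd ℂ) (∑ d ∈ D, (χ d : ℂ)) := by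
    intro χ
    rw [map_sum]
    exact Finset.sum_congr rfl fun d _ => PDSaux.char_inv_eq_conj χ d
  have hS1 : ∑ d ∈ D, (((1 : G →* ℂˣ) d : ℂˣ) : ℂ) = (k : ℂ) := by simp [hk]
  constructor
  · rintro ⟨hlam, hmu, hinv⟩ χ hχ
    have hpt : ∀ g : G,
        (((((D ×ˢ D).filter (fun p => p.1 ≠ p.2 ∧ p.1 * p.2⁻¹ = g)).card : ℂ))
          - lam * (if g ∈ D then 1 else 0) - mu * (if g ∈ D ∨ g = 1 then 0 else 1)) = 0 := by
      intro g
      by_cases hgD : g ∈ D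
      · rw [hlam g hgD]
        simp [hgD]
      · by_cases hg1 : g = 1
        · subst hg1
          have hN1 : ((D ×ˢ D).filter (fun p => p.1 ≠ p.2 ∧ p.1 * p.2⁻¹ = (1 : G))).card = 0 := by
            rw [Finset.card_eq_zero, Finset.filter_eq_empty_iff]
            intro p hp
            rintro ⟨hne, heq⟩
            exact hne (by rwa [mul_inv_eq_one] at heq)
          rw [hN1]
          simp [h1]
        · rw [hmu g hgD hg1]
          simp [hgD, hg1]
    have hzero0 : ∑ g : G, (((((D ×ˢ D).filter (fun p => p.1 ≠ p.2 ∧ p.1 * p.2⁻¹ = g)).card : ℂ))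
          - lam * (if g ∈ D then 1 else 0) - mu * (if g ∈ D ∨ g = 1 then 0 else 1)) * (χ g : ℂ)
        = 0 := Finset.sum_eq_zero fun g _ => by rw [hpt g, zero_mul]
    have hzero := (hzero0.symm.trans (PDSaux.key_identity D k lam mu hk h1 χ))
    rw [PDSaux.sum_char_univ hχ] at hzero
    have hS'eq : ∑ y ∈ D, (χ y⁻¹ : ℂ) = ∑ d ∈ D, (χ d : ℂ) := by
      rw [← hSinv χ, hinv]
    rw [hS'eq] at hzero
    refine (quad _).mp ?_
    linear_combination -hzero
  · intro hsum
    have hSreal : ∀ χ : G →* ℂˣ,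
        (starRingEnd ℂ) (∑ d ∈ D, (χ d : ℂ)) = ∑ d ∈ D, (χ d : ℂ) := by
      intro χ
      by_cases hχ : χ = 1
      · subst hχ
        rw [hS1]
        simp
      · rcases hsum χ hχ with h | h <;> rw [h] <;>
          simp [map_div₀, Complex.conj_ofReal, map_ofNat]
    have hS'S : ∀ χ : G →* ℂˣ, ∑ y ∈ D, (χ y⁻¹ : ℂ) = ∑ d ∈ D, (χ d : ℂ) := by
      intro χ
      rw [hSconj χ, hSreal χ]
    have hDinv : D⁻¹ = D := by
      have hz : ∀ χ : G →* ℂˣ,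
          ∑ g : G, (((if g ∈ D then (1 : ℂ) else 0) - (if g ∈ D⁻¹ then 1 else 0)) * (χ g : ℂ))
            = 0 := by
        intro χ
        simp only [sub_mul, ite_mul, one_mul, zero_mul]
        rw [Finset.sum_sub_distrib, Finset.sum_ite_mem, Finset.sum_ite_mem,
          Finset.univ_inter, Finset.univ_inter, hSinv χ, hS'S χ, sub_self]
      have hzz := PDSaux.inversion
        (fun g => (if g ∈ D then (1 : ℂ) else 0) - (if g ∈ D⁻¹ then 1 else 0)) hz
      ext g
      have hg := hzz g
      constructor
      · intro h2g
        by_contra h1g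
        rw [if_pos h2g, if_neg h1g] at hg
        norm_num at hg
      · intro h1g
        by_contra h2g
        rw [if_pos h1g, if_neg h2g] at hg
        norm_num at hg
    have hpC : (k : ℂ) * ((k : ℂ) - 1) = lam * k + mu * ((v : ℂ) - 1 - k) := by
      exact_mod_cast hparam
    have hz2 : ∀ χ : G →* ℂˣ,
        ∑ g : G, (((((D ×ˢ D).filter (fun p => p.1 ≠ p.2 ∧ p.1 * p.2⁻¹ = g)).card : ℂ))
            - lam * (if g ∈ D then 1 else 0) - mu * (if g ∈ D ∨ g = 1 then 0 else 1)) * (χ g : ℂ)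
          = 0 := by
      intro χ
      rw [PDSaux.key_identity D k lam mu hk h1 χ]
      by_cases hχ : χ = 1
      · subst hχ
        rw [hS1]
        have h2 : ∑ y ∈ D, (((1 : G →* ℂˣ) y⁻¹ : ℂˣ) : ℂ) = (k : ℂ) := by simp [hk]
        have h3 : ∑ g : G, (((1 : G →* ℂˣ) g : ℂˣ) : ℂ) = (v : ℂ) := by
          simp [Finset.card_univ, hv]
        rw [h2, h3]
        linear_combination hpC
      · have hq := (quad (∑ d ∈ D, (χ d : ℂ))).mpr (hsum χ hχ)
        rw [hS'S χ, PDSaux.sum_char_univ hχ]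
        linear_combination hq
    have hz2' := PDSaux.inversion
      (fun g => ((((D ×ˢ D).filter (fun p => p.1 ≠ p.2 ∧ p.1 * p.2⁻¹ = g)).card : ℂ))
        - lam * (if g ∈ D then 1 else 0) - mu * (if g ∈ D ∨ g = 1 then 0 else 1)) hz2
    refine ⟨?_, ?_, hDinv⟩
    · intro g hgD
      have hg := hz2' g
      rw [if_pos hgD, if_pos (Or.inl hgD)] at hg
      have hcast : ((((D ×ˢ D).filter (fun p => p.1 ≠ p.2 ∧ p.1 * p.2⁻¹ = g)).card : ℂ))
          = (lam : ℂ) := by linear_combination hg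
      exact_mod_cast hcast
    · intro g hgD hg1
      have hg := hz2' g
      rw [if_neg hgD, if_neg (by tauto)] at hg
      have hcast : ((((D ×ˢ D).filter (fun p => p.1 ≠ p.2 ∧ p.1 * p.2⁻¹ = g)).card : ℂ))
          = (mu : ℂ) := by linear_combination hg
      exact_mod_cast hcast
end

section
/- Let G be a finite group of order v and let D be a (v,k,λ,μ) partial difference set in G with λ ≠ μ. Then D^{(-1)} = D, that is, D is closed under group inversion. -/
open Finset

/-- Swapping the two entries of a pair `(x, y)` turns the difference `x * y⁻¹` into its inverse. -/
theorem card_filter_mul_inv_eq_inv {G : Type*} [Group G] [DecidableEq G] (D : Finset G)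
    (g : G) :
    ((D ×ˢ D).filter (fun p => p.1 ≠ p.2 ∧ p.1 * p.2⁻¹ = g⁻¹)).card =
      ((D ×ˢ D).filter (fun p => p.1 ≠ p.2 ∧ p.1 * p.2⁻¹ = g)).card := by
  refine card_nbij' Prod.swap Prod.swap ?_ ?_ (fun _ _ => rfl) (fun _ _ => rfl) <;>
  · rintro ⟨x, y⟩
    simp only [coe_filter, mem_product, Set.mem_ofPred_eq, Prod.fst_swap, Prod.snd_swap]
    rintro ⟨⟨hx, hy⟩, hxy, hdiff⟩
    have hswap : y * x⁻¹ = (x * y⁻¹)⁻¹ := by group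
    exact ⟨⟨hy, hx⟩, Ne.symm hxy, by simp only [hswap, hdiff, inv_inv]⟩

open scoped Classical Pointwise in
theorem partialDiffSet_inv_eq_self_general {G : Type*} [Group G]
    (lam mu : ℕ) (D : Finset G)
    (hlam : ∀ g ∈ D,
      ((D ×ˢ D).filter (fun p => p.1 ≠ p.2 ∧ p.1 * p.2⁻¹ = g)).card = lam)
    (hmu : ∀ g : G, g ∉ D → g ≠ 1 →
      ((D ×ˢ D).filter (fun p => p.1 ≠ p.2 ∧ p.1 * p.2⁻¹ = g)).card = mu)
    (hne : lam ≠ mu) :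
    D⁻¹ = D := by
  have inv_mem : ∀ g ∈ D, g⁻¹ ∈ D := by
    intro g hg
    by_contra hg'
    have hg_ne_one : g⁻¹ ≠ 1 := fun h => hg' (by rwa [h, ← inv_eq_one.mp h])
    exact hne (by rw [← hlam g hg, ← hmu g⁻¹ hg' hg_ne_one, card_filter_mul_inv_eq_inv])
  ext g
  rw [mem_inv']
  exact ⟨fun hg => inv_inv g ▸ inv_mem _ hg, inv_mem g⟩

open scoped Classical Pointwise in
/-- A `(v,k,λ,μ)` partial difference set `D` in a finite group `G` with `λ ≠ μ` is closed
under group inversion: `D⁽⁻¹⁾ = D`. -/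
theorem partialDiffSet_inv_eq_self {G : Type*} [Group G] [Fintype G]
    (v k lam mu : ℕ) (D : Finset G) (hv : Fintype.card G = v) (hk : D.card = k)
    (h1 : (1 : G) ∉ D)
    (hlam : ∀ g ∈ D,
      ((D ×ˢ D).filter (fun p => p.1 ≠ p.2 ∧ p.1 * p.2⁻¹ = g)).card = lam)
    (hmu : ∀ g : G, g ∉ D → g ≠ 1 →
      ((D ×ˢ D).filter (fun p => p.1 ≠ p.2 ∧ p.1 * p.2⁻¹ = g)).card = mu)
    (hne : lam ≠ mu) :
    D⁻¹ = D :=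
  partialDiffSet_inv_eq_self_general lam mu D hlam hmu hne
end

section
/- Let n be an even positive integer and let f : (𝔽_2)^n → 𝔽_2 be a Boolean function with |D_f| ≤ 2^{n−1}, where D_f = { x : f(x) = 1 }. Then f is bent (that is, its Walsh–Hadamard transform satisfies Σ_{x ∈ 𝔽_2^n} (−1)^{f(x) + a·x} ∈ {−2^{n/2}, 2^{n/2}} for every a ∈ 𝔽_2^n) if and only if D_f is a (2^n, 2^{n−1} − 2^{n/2−1}, 2^{n−2} − 2^{n/2−1}) difference set in the additive group (ℤ_2)^n. -/
open Finset

namespace BentDS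

noncomputable def e (n : ℕ) (a x : Fin n → ZMod 2) : ℝ :=
  (-1) ^ (∑ i, a i * x i).val

lemma zmod2_cases (u : ZMod 2) : u = 0 ∨ u = 1 := by revert u; decide

lemma eps_add (u v : ZMod 2) :
    ((-1 : ℝ)) ^ (u + v).val = (-1) ^ u.val * (-1) ^ v.val := by
  rcases zmod2_cases u with h | h <;> rcases zmod2_cases v with h' | h' <;>
    subst h <;> subst h' <;> norm_num [show ((2:ZMod 2)).val = 0 from rfl, ZMod.val_one]

variable {n : ℕ}

lemma dot_add (a x y : Fin n → ZMod 2) :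
    ∑ i, a i * (x + y) i = (∑ i, a i * x i) + ∑ i, a i * y i := by
  simp [mul_add, Finset.sum_add_distrib]

lemma e_add (a x y : Fin n → ZMod 2) : e n a (x + y) = e n a x * e n a y := by
  unfold e; rw [dot_add, eps_add]

lemma e_symm (a x : Fin n → ZMod 2) : e n a x = e n x a := by
  unfold e; rw [Finset.sum_congr rfl (fun i _ => mul_comm (a i) (x i))]

lemma e_zero_left (x : Fin n → ZMod 2) : e n 0 x = 1 := by
  simp [e]

lemma e_zero_right (a : Fin n → ZMod 2) : e n a 0 = 1 := by
  simp [e]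

lemma add_add_cancel (x y : Fin n → ZMod 2) : x + (x + y) = y := by
  funext i
  simp only [Pi.add_apply]
  have : ∀ u v : ZMod 2, u + (u + v) = v := by decide
  exact this _ _

lemma sub_eq_add' (x y : Fin n → ZMod 2) : x - y = x + y := by
  funext i
  have : ∀ u v : ZMod 2, u - v = u + v := by decide
  exact this _ _

lemma add_eq_zero_iff' (x y : Fin n → ZMod 2) : x + y = 0 ↔ x = y := by
  constructor
  · intro h; funext i
    have : ∀ u v : ZMod 2, u + v = 0 → u = v := by decide
    exact this _ _ (congrFun h i)
  · rintro rfl; funext i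
    simp only [Pi.add_apply]
    have : ∀ u : ZMod 2, u + u = 0 := by decide
    simp [this]

lemma sum_e (a : Fin n → ZMod 2) :
    ∑ x, e n a x = if a = 0 then (2 : ℝ) ^ n else 0 := by
  split_ifs with h
  · subst h
    simp [e_zero_left, Finset.card_univ]
  · obtain ⟨i, hi⟩ := Function.ne_iff.mp h
    have hai : a i = 1 := (zmod2_cases (a i)).resolve_left hi
    set c : Fin n → ZMod 2 := Pi.single i 1 with hc
    have hec : e n a c = -1 := by
      unfold e
      have : ∑ j, a j * c j = 1 := by
        rw [Fintype.sum_eq_single i (fun j hj => by simp [hc, Pi.single_eq_of_ne hj])]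
        simp [hc, hai]
      rw [this]; norm_num [ZMod.val_one]
    have key : ∑ x, e n a x = ∑ x, e n a (x + c) :=
      (Fintype.sum_equiv (Equiv.addRight c) _ _ (fun x => rfl)).symm
    have h2 : ∑ x, e n a (x + c) = -∑ x, e n a x := by
      rw [← Finset.sum_neg_distrib]
      exact Finset.sum_congr rfl (fun x _ => by rw [e_add, hec]; ring)
    linarith [key, h2]

lemma card_pairs (D : Finset (Fin n → ZMod 2)) (g : Fin n → ZMod 2) (hg : g ≠ 0) :
    ((D ×ˢ D).filter (fun q => q.1 ≠ q.2 ∧ q.1 - q.2 = g)).card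
      = (D.filter (fun x => x + g ∈ D)).card := by
  apply Finset.card_nbij' (fun q => q.2) (fun x => (x + g, x))
  · rintro ⟨x, y⟩ hq
    simp only [Finset.mem_coe, Finset.mem_filter, Finset.mem_product] at hq ⊢
    obtain ⟨⟨hx, hy⟩, hne, hsub⟩ := hq
    refine ⟨hy, ?_⟩
    rw [sub_eq_add'] at hsub
    have : y + g = x := by
      rw [← hsub]; funext i
      simp only [Pi.add_apply]
      have : ∀ u v : ZMod 2, u + (v + u) = v := by decide
      exact this _ _
    rwa [this]
  · intro x hx
    simp only [Finset.mem_coe, Finset.mem_filter, Finset.mem_product] at hx ⊢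
    obtain ⟨hx1, hx2⟩ := hx
    refine ⟨⟨hx2, hx1⟩, ?_, ?_⟩
    · intro h
      apply hg
      funext i
      have h2 := congrFun h i
      simp only [Pi.add_apply] at h2
      have : ∀ u v : ZMod 2, u + v = u → v = 0 := by decide
      exact this _ _ h2
    · rw [sub_eq_add']
      funext i
      simp only [Pi.add_apply]
      have : ∀ u v : ZMod 2, u + v + u = v := by decide
      exact this _ _
  · rintro ⟨x, y⟩ hq
    simp only [Finset.mem_coe, Finset.mem_filter, Finset.mem_product] at hq
    obtain ⟨⟨hx, hy⟩, hne, hsub⟩ := hq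
    rw [sub_eq_add'] at hsub
    have hxy : y + g = x := by
      rw [← hsub]; funext i
      simp only [Pi.add_apply]
      have : ∀ u v : ZMod 2, u + (v + u) = v := by decide
      exact this _ _
    simp [hxy]
  · intro x hx; rfl

end BentDS

open BentDS

/-- Bent functions and difference sets. -/
theorem bent_iff_diffSet {n : ℕ} (hpos : 0 < n) (heven : Even n)
    (f : (Fin n → ZMod 2) → ZMod 2)
    (hsize : (Finset.univ.filter (fun x => f x = 1)).card ≤ 2 ^ (n - 1)) :
    (∀ a : Fin n → ZMod 2,
        (∑ x : Fin n → ZMod 2, (-1 : ℝ) ^ (f x + ∑ i, a i * x i).val) = 2 ^ (n / 2) ∨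
        (∑ x : Fin n → ZMod 2, (-1 : ℝ) ^ (f x + ∑ i, a i * x i).val) = -2 ^ (n / 2)) ↔
      ((Finset.univ.filter (fun x => f x = 1)).card = 2 ^ (n - 1) - 2 ^ (n / 2 - 1) ∧
        ∀ g : Fin n → ZMod 2, g ≠ 0 →
          (((Finset.univ.filter (fun x => f x = 1)) ×ˢ
                (Finset.univ.filter (fun x => f x = 1))).filter
              (fun q => q.1 ≠ q.2 ∧ q.1 - q.2 = g)).card =
            2 ^ (n - 2) - 2 ^ (n / 2 - 1)) := by
  obtain ⟨r, hr⟩ := heven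
  obtain ⟨p, hp⟩ : ∃ p, n = 2 * p + 2 := ⟨r - 1, by omega⟩
  have hn1 : n - 1 = 2 * p + 1 := by omega
  have hn2' : n / 2 = p + 1 := by omega
  have hn2'' : n / 2 - 1 = p := by omega
  have hnm2 : n - 2 = 2 * p := by omega
  rw [hn1] at hsize
  rw [hn2'', hn2', hn1, hnm2]
  set D := Finset.univ.filter (fun x => f x = 1) with hD
  set I : (Fin n → ZMod 2) → ℝ := fun x => if f x = 1 then 1 else 0 with hI
  set S : (Fin n → ZMod 2) → ℝ := fun a => ∑ x, I x * e n a x with hS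
  set N : (Fin n → ZMod 2) → ℕ :=
    fun g => (Finset.univ.filter (fun x => f x = 1 ∧ f (x + g) = 1)).card with hN
  have h2n : (2 : ℝ) ^ n = 2 ^ (2 * p + 2) := by rw [hp]
  -- Walsh transform formula
  have hW : ∀ a : Fin n → ZMod 2,
      (∑ x : Fin n → ZMod 2, (-1 : ℝ) ^ (f x + ∑ i, a i * x i).val)
        = (if a = 0 then (2 : ℝ) ^ n else 0) - 2 * S a := by
    intro a
    have h1 : ∀ x, ((-1 : ℝ)) ^ (f x + ∑ i, a i * x i).val
        = e n a x - 2 * (I x * e n a x) := by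
      intro x
      rw [eps_add]
      rcases zmod2_cases (f x) with h | h <;>
        · simp only [hI, h, e, ZMod.val_zero, ZMod.val_one]
          norm_num
          try ring
    rw [Finset.sum_congr rfl (fun x _ => h1 x), Finset.sum_sub_distrib, sum_e]
    simp only [hS, Finset.mul_sum]
  have hS0 : S 0 = (D.card : ℝ) := by
    simp only [hS, e_zero_left, mul_one, hD, hI]
    rw [Finset.sum_boole]
  have hNcast : ∀ g, (N g : ℝ) = ∑ x, I x * I (x + g) := by
    intro g
    have h1 : ∀ x, I x * I (x + g) = if (f x = 1 ∧ f (x + g) = 1) then (1 : ℝ) else 0 := by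
      intro x
      by_cases h1 : f x = 1 <;> by_cases h2 : f (x + g) = 1 <;> simp [hI, h1, h2]
    rw [Finset.sum_congr rfl (fun x _ => h1 x), Finset.sum_boole, hN]
  have h3 : ∀ a, S a ^ 2 = ∑ g, (N g : ℝ) * e n a g := by
    intro a
    have hsq : S a ^ 2 = ∑ x, ∑ y, (I x * e n a x) * (I y * e n a y) := by
      rw [sq, hS]; exact Finset.sum_mul_sum _ _ _ _
    rw [hsq]
    have hinner : ∀ x, (∑ y, (I x * e n a x) * (I y * e n a y))
        = ∑ g, I x * I (x + g) * e n a g := by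
      intro x
      refine (Fintype.sum_equiv (Equiv.addLeft x) _ _ ?_).symm
      intro g
      have he : e n a x * e n a (x + g) = e n a g := by
        rw [← e_add, add_add_cancel]
      simp only [Equiv.coe_addLeft]
      linear_combination (-(I x * I (x + g))) * he
    rw [Finset.sum_congr rfl (fun x _ => hinner x), Finset.sum_comm]
    exact Finset.sum_congr rfl (fun g _ => by rw [hNcast g, Finset.sum_mul])
  have h4 : ∀ g, (∑ a, S a ^ 2 * e n a g) = 2 ^ n * (N g : ℝ) := by
    intro g
    have hterm : ∀ a, S a ^ 2 * e n a g = ∑ h, (N h : ℝ) * e n a (h + g) := by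
      intro a; rw [h3 a, Finset.sum_mul]
      exact Finset.sum_congr rfl (fun h _ => by rw [mul_assoc, e_add])
    rw [Finset.sum_congr rfl (fun a _ => hterm a), Finset.sum_comm]
    have hsum : ∀ h : Fin n → ZMod 2,
        (∑ a, (N h : ℝ) * e n a (h + g)) = (N h : ℝ) * (if h = g then (2 : ℝ) ^ n else 0) := by
      intro h
      rw [← Finset.mul_sum]
      congr 1
      calc ∑ a, e n a (h + g) = ∑ a, e n (h + g) a :=
            Finset.sum_congr rfl (fun a _ => e_symm a (h + g))
        _ = if h + g = 0 then (2 : ℝ) ^ n else 0 := sum_e (h + g)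
        _ = if h = g then (2 : ℝ) ^ n else 0 := by simp only [BentDS.add_eq_zero_iff']
    rw [Finset.sum_congr rfl (fun h _ => hsum h)]
    simp only [mul_ite, mul_zero]
    rw [Finset.sum_ite_eq' Finset.univ g (fun h => (N h : ℝ) * 2 ^ n)]
    simp [mul_comm]
  -- filter equivalence
  have hfe : ∀ g, D.filter (fun x => x + g ∈ D)
      = Finset.univ.filter (fun x => f x = 1 ∧ f (x + g) = 1) := by
    intro g
    ext x
    simp [hD, Finset.mem_filter]
  have hcardN : ∀ g : Fin n → ZMod 2, g ≠ 0 →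
      ((D ×ˢ D).filter (fun q => q.1 ≠ q.2 ∧ q.1 - q.2 = g)).card = N g := by
    intro g hg
    rw [card_pairs D g hg, hfe g, hN]
  have hlek : (2 : ℕ) ^ p ≤ 2 ^ (2 * p + 1) := Nat.pow_le_pow_right (by norm_num) (by omega)
  have hlel : (2 : ℕ) ^ p ≤ 2 ^ (2 * p) := Nat.pow_le_pow_right (by norm_num) (by omega)
  have hkcast : ((2 ^ (2 * p + 1) - 2 ^ p : ℕ) : ℝ) = 2 ^ (2 * p + 1) - 2 ^ p := by
    rw [Nat.cast_sub hlek]; push_cast; ring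
  have hlcast : ((2 ^ (2 * p) - 2 ^ p : ℕ) : ℝ) = 2 ^ (2 * p) - 2 ^ p := by
    rw [Nat.cast_sub hlel]; push_cast; ring
  have hppos : (0 : ℝ) < 2 ^ p := by positivity
  have hpow1 : (2 : ℝ) ^ (2 * p + 2) = 2 * 2 ^ (2 * p + 1) := by ring
  have hpow2 : (2 : ℝ) ^ (p + 1) = 2 * 2 ^ p := by ring
  constructor
  · intro hbent
    have hb0 := hbent 0
    rw [hW 0, if_pos rfl, hS0, h2n] at hb0
    have hsizeR : (D.card : ℝ) ≤ 2 ^ (2 * p + 1) := by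
      calc (D.card : ℝ) ≤ ((2 ^ (2 * p + 1) : ℕ) : ℝ) := Nat.cast_le.mpr hsize
        _ = 2 ^ (2 * p + 1) := by push_cast; ring
    have hkR : (D.card : ℝ) = 2 ^ (2 * p + 1) - 2 ^ p := by
      rcases hb0 with h | h
      · linarith
      · linarith
    have hk : D.card = 2 ^ (2 * p + 1) - 2 ^ p := by
      exact_mod_cast hkR.trans hkcast.symm
    refine ⟨hk, ?_⟩
    intro g hg
    have hSa : ∀ a : Fin n → ZMod 2, a ≠ 0 → S a ^ 2 = 2 ^ (2 * p) := by
      intro a ha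
      have hb := hbent a
      rw [hW a, if_neg ha] at hb
      rcases hb with h | h
      · have : S a = -2 ^ p := by linarith
        rw [this]; ring
      · have : S a = 2 ^ p := by linarith
        rw [this]; ring
    have hsum0 : (∑ a, (2 : ℝ) ^ (2 * p) * e n a g) = 0 := by
      rw [← Finset.mul_sum, Finset.sum_congr rfl (fun a _ => e_symm a g), sum_e, if_neg hg,
        mul_zero]
    have hsplit : (∑ a, S a ^ 2 * e n a g) = S 0 ^ 2 - 2 ^ (2 * p) := by
      have hterm : ∀ a : Fin n → ZMod 2, S a ^ 2 * e n a g
          = (S a ^ 2 - 2 ^ (2 * p)) * e n a g + 2 ^ (2 * p) * e n a g := fun a => by ring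
      rw [Finset.sum_congr rfl (fun a _ => hterm a), Finset.sum_add_distrib, hsum0, add_zero]
      rw [Fintype.sum_eq_single 0 (fun a ha => by rw [hSa a ha]; ring)]
      rw [e_zero_left]; ring
    have hkey := h4 g
    rw [hsplit, hS0, hkR, h2n] at hkey
    have hNg : (N g : ℝ) = 2 ^ (2 * p) - 2 ^ p := by
      have hne : (2 : ℝ) ^ (2 * p + 2) ≠ 0 := by positivity
      apply mul_left_cancel₀ hne
      rw [← hkey]; ring
    rw [hcardN g hg]
    exact_mod_cast hNg.trans hlcast.symm
  · rintro ⟨hk, hds⟩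
    have hkR : (D.card : ℝ) = 2 ^ (2 * p + 1) - 2 ^ p := by
      rw [hk]; exact hkcast
    have hNg : ∀ g : Fin n → ZMod 2, g ≠ 0 → (N g : ℝ) = 2 ^ (2 * p) - 2 ^ p := by
      intro g hg
      have h := hds g hg
      rw [hcardN g hg] at h
      rw [h]; exact hlcast
    have hN0R : (N 0 : ℝ) = (D.card : ℝ) := by
      have : N 0 = D.card := by
        simp only [hN, hD]
        congr 1
        ext x
        simp
      rw [this]
    intro a
    by_cases ha : a = 0
    · subst ha
      left
      rw [hW 0, if_pos rfl, hS0, hkR, h2n]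
      ring
    · have hs2 : S a ^ 2 = 2 ^ (2 * p) := by
        rw [h3 a]
        have hterm : ∀ h : Fin n → ZMod 2, (N h : ℝ) * e n a h
            = ((N h : ℝ) - (2 ^ (2 * p) - 2 ^ p)) * e n a h
              + (2 ^ (2 * p) - 2 ^ p) * e n a h := fun h => by ring
        rw [Finset.sum_congr rfl (fun h _ => hterm h), Finset.sum_add_distrib]
        have h1 : (∑ h, ((2 : ℝ) ^ (2 * p) - 2 ^ p) * e n a h) = 0 := by
          rw [← Finset.mul_sum, sum_e, if_neg ha, mul_zero]
        have h2 : (∑ h, ((N h : ℝ) - (2 ^ (2 * p) - 2 ^ p)) * e n a h)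
            = (N 0 : ℝ) - (2 ^ (2 * p) - 2 ^ p) := by
          rw [Fintype.sum_eq_single 0 (fun h hh => by rw [hNg h hh]; ring)]
          rw [e_zero_right]; ring
        rw [h1, h2, hN0R, hkR]; ring
      have hwa := hW a
      rw [if_neg ha] at hwa
      have hfac : ((∑ x : Fin n → ZMod 2, (-1 : ℝ) ^ (f x + ∑ i, a i * x i).val) - 2 ^ (p + 1))
          * ((∑ x : Fin n → ZMod 2, (-1 : ℝ) ^ (f x + ∑ i, a i * x i).val) + 2 ^ (p + 1)) = 0 := by
        rw [hwa]
        linear_combination 4 * hs2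
      rcases mul_eq_zero.mp hfac with h | h
      · left; linarith [h]
      · right; linarith [h]
end
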